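/- Let N ≥ 1. For i ∈ {1,…,N}, let Aᵢ ∈ ℝ^{nᵢ×nᵢ}, Bᵢ⁽¹⁾ ∈ ℝ^{nᵢ×pᵢ}, symmetric positive definite Qᵢ ∈ ℝ^{nᵢ×nᵢ}, scalars εᵢ > 0, and coupling blocks h_{i,j} ∈ ℝ^{pᵢ×nⱼ} for |i−j| ≤ 1 (set h_{i,j} = 0 for |i−j| > 1). Define Ĥ_{i,j} = Qᵢ Bᵢ⁽¹⁾ h_{i,j}, 𝒮ᵢ = −(Aᵢ'Qᵢ + QᵢAᵢ) − (Ĥ_{i,i} + Ĥ_{i,i}') − εᵢ I, and the messenger matrices ℳ₁ = 𝒮₁ and ℳᵢ = 𝒮ᵢ − (Ĥ_{i-1,i}' + Ĥ_{i,i-1}) ℳ_{i-1}⁻¹ (Ĥ_{i-1,i} + Ĥ_{i,i-1}') for i ≥ 2. Suppose ℳᵢ is well-defined and positive definite for every i ∈ {1,…,N}. Then, with A = diag(A₁,…,A_N), B⁽¹⁾ = diag(B₁⁽¹⁾,…,B_N⁽¹⁾), Q = diag(Q₁,…,Q_N), H = [h_{i,j}], and ε = min(ε₁,…,ε_N), the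 matrix W = −(A + B⁽¹⁾H)'Q − Q(A + B⁽¹⁾H) − εI is positive definite. -/

import Mathlib

/-!
Write `x = (x₀, …, x_N)` blockwise. Since `H` is block tridiagonal, `xᵀ W x` equals
`∑ xᵢᵀ 𝒮ᵢ xᵢ - 2 ∑ xᵢᵀ Cᵢ xᵢ₊₁ + ∑ (εᵢ - ε) |xᵢ|²` with `Cᵢ = Ĥ_{i,i+1} + Ĥ_{i+1,i}ᵀ`.
The messenger recursion `ℳᵢ₊₁ = 𝒮ᵢ₊₁ - Cᵢᵀ ℳᵢ⁻¹ Cᵢ` is a block LDLᵀ factorisation: the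
tridiagonal part is the sum of completed squares `yᵢᵀ ℳᵢ yᵢ` with `yᵢ = xᵢ - ℳᵢ⁻¹ Cᵢ xᵢ₊₁`.
All of them are nonnegative, and for the last nonzero block `x_j` we get `y_j = x_j`, so
the square `x_jᵀ ℳ_j x_j` is positive.
-/

open Matrix Finset

section SigmaBlocks

variable {R ι : Type*} [CommRing R] {m n : ι → Type*}

def Matrix.vecBlock (x : (Σ i, m i) → R) (i : ι) : m i → R := fun a => x ⟨i, a⟩

def Matrix.sigmaBlock (P : Matrix (Σ i, m i) (Σ j, n j) R) (i j : ι) : Matrix (m i) (n j) R :=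
  of fun a b => P ⟨i, a⟩ ⟨j, b⟩

theorem Matrix.IsSymm.blockDiagonal' [DecidableEq ι] {D : ∀ i, Matrix (m i) (m i) R}
    (hD : ∀ i, (D i).IsSymm) : (blockDiagonal' D).IsSymm := by
  rw [IsSymm, blockDiagonal'_transpose]
  exact congrArg _ (funext fun i => (hD i).eq)

variable [Fintype ι] [∀ i, Fintype (n i)]

theorem Matrix.dotProduct_sigma (x y : (Σ i, n i) → R) :
    x ⬝ᵥ y = ∑ i, vecBlock x i ⬝ᵥ vecBlock y i := by
  rw [dotProduct, ← univ_sigma_univ, sum_sigma]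
  rfl

theorem Matrix.vecBlock_mulVec (P : Matrix (Σ i, m i) (Σ j, n j) R) (v : (Σ j, n j) → R)
    (i : ι) : vecBlock (P *ᵥ v) i = ∑ j, P.sigmaBlock i j *ᵥ vecBlock v j := by
  ext a
  simp only [vecBlock, mulVec, dotProduct, ← univ_sigma_univ, sum_sigma, Finset.sum_apply,
    sigmaBlock, of_apply]

theorem Matrix.vecBlock_blockDiagonal'_mulVec [DecidableEq ι] (D : ∀ i, Matrix (m i) (n i) R)
    (v : (Σ j, n j) → R) (i : ι) :
    vecBlock (blockDiagonal' D *ᵥ v) i = D i *ᵥ vecBlock v i := by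
  rw [vecBlock_mulVec, Finset.sum_eq_single i]
  · congr
    ext a b
    simp [sigmaBlock, blockDiagonal'_apply_eq]
  · intro j _ hj
    ext a
    simp [sigmaBlock, mulVec, dotProduct, blockDiagonal'_apply_ne _ _ _ (Ne.symm hj)]
  · simp

theorem Matrix.dotProduct_blockDiagonal'_mul_mulVec [DecidableEq ι] {p : ι → Type*}
    [∀ i, Fintype (p i)] (Q A : ∀ i, Matrix (n i) (n i) R) (B : ∀ i, Matrix (n i) (p i) R)
    (H : Matrix (Σ i, p i) (Σ i, n i) R) (x : (Σ i, n i) → R) :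
    x ⬝ᵥ ((blockDiagonal' Q * (blockDiagonal' A + blockDiagonal' B * H)) *ᵥ x) =
      ∑ i, (vecBlock x i ⬝ᵥ ((Q i * A i) *ᵥ vecBlock x i) +
        ∑ j, vecBlock x i ⬝ᵥ ((Q i * B i * H.sigmaBlock i j) *ᵥ vecBlock x j)) := by
  rw [dotProduct_sigma]
  refine sum_congr rfl fun i _ => ?_
  have hblock_add (u v : (Σ i, n i) → R) : vecBlock (u + v) i = vecBlock u i + vecBlock v i :=
    rfl
  simp only [← mulVec_mulVec, add_mulVec, hblock_add, vecBlock_blockDiagonal'_mulVec]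
  simp only [vecBlock_mulVec, mulVec_add, mulVec_sum, dotProduct_add, dotProduct_sum]

end SigmaBlocks

section ExtendBlocks

variable {R : Type*} [Zero R] {m : ℕ → Type*}

def Matrix.extendBlocks {n : ℕ} (x : (Σ i : Fin n, m i) → R) (i : ℕ) : m i → R :=
  if hi : i < n then vecBlock x ⟨i, hi⟩ else 0

theorem Matrix.extendBlocks_coe {n : ℕ} (x : (Σ i : Fin n, m i) → R) (i : Fin n) :
    extendBlocks x i = vecBlock x i :=
  dif_pos i.2

theorem Matrix.extendBlocks_of_le {n : ℕ} (x : (Σ i : Fin n, m i) → R) {i : ℕ} (hi : n ≤ i) :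
    extendBlocks x i = 0 :=
  dif_neg (by omega)

theorem Matrix.exists_extendBlocks_ne_zero {n : ℕ} {x : (Σ i : Fin n, m i) → R} (hx : x ≠ 0) :
    ∃ i < n, extendBlocks x i ≠ 0 := by
  obtain ⟨⟨i, a⟩, hxa⟩ := Function.ne_iff.mp hx
  refine ⟨i, i.2, fun h0 => hxa ?_⟩
  rw [extendBlocks_coe] at h0
  exact congrFun h0 a

end ExtendBlocks

theorem Finset.sum_range_sum_range_of_tridiagonal {M : Type*} [AddCommMonoid M] (t : ℕ → ℕ → M)
    (ht : ∀ i j, i + 1 < j ∨ j + 1 < i → t i j = 0) (n : ℕ) :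
    ∑ i ∈ range (n + 1), ∑ j ∈ range (n + 1), t i j =
      ∑ i ∈ range (n + 1), t i i + ∑ i ∈ range n, (t i (i + 1) + t (i + 1) i) := by
  induction n with
  | zero => simp
  | succ n ih =>
    have hrow : ∑ j ∈ range (n + 1), t (n + 1) j = t (n + 1) n :=
      sum_eq_single_of_mem n (by simp) fun j hj hjn => ht _ _ (Or.inr (by simp at hj; omega))
    have hcol : ∑ i ∈ range (n + 1), t i (n + 1) = t n (n + 1) :=
      sum_eq_single_of_mem n (by simp) fun i hi hin => ht _ _ (Or.inl (by simp at hi; omega))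
    rw [sum_range_succ, sum_range_succ _ (n + 1), sum_congr rfl fun i _ => sum_range_succ _ (n + 1),
      sum_add_distrib, ih, hrow, hcol, sum_range_succ (fun i => t i i) (n + 1),
      sum_range_succ (fun i => t i (i + 1) + t (i + 1) i) n]
    abel

section Messenger

variable {R : Type*} [CommRing R] {m : ℕ → Type*} [∀ i, Fintype (m i)] [∀ i, DecidableEq (m i)]

theorem Matrix.dotProduct_mulVec_sub_inv_mulVec {k : Type*} [Fintype k] [DecidableEq k]
    {M : Matrix k k R} (hM : M.IsSymm) (hdet : IsUnit M.det) (u w : k → R) :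
    (u - M⁻¹ *ᵥ w) ⬝ᵥ (M *ᵥ (u - M⁻¹ *ᵥ w)) =
      u ⬝ᵥ (M *ᵥ u) - 2 * (u ⬝ᵥ w) + w ⬝ᵥ (M⁻¹ *ᵥ w) := by
  have hMw : M *ᵥ (M⁻¹ *ᵥ w) = w := by rw [mulVec_mulVec, mul_nonsing_inv _ hdet, one_mulVec]
  have hcross : (M⁻¹ *ᵥ w) ⬝ᵥ (M *ᵥ u) = u ⬝ᵥ w := by
    rw [← dotProduct_transpose_mulVec, hM.eq, hMw]
  rw [mulVec_sub, hMw, sub_dotProduct, dotProduct_sub, dotProduct_sub, hcross,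
    dotProduct_comm (M⁻¹ *ᵥ w) w]
  ring

theorem sum_dotProduct_messenger_eq (S M : ∀ i, Matrix (m i) (m i) R)
    (C : ∀ i, Matrix (m i) (m (i + 1)) R) (x : ∀ i, m i → R) (N : ℕ) (hM0 : M 0 = S 0)
    (hMs : ∀ i, M (i + 1) = S (i + 1) - (C i)ᵀ * (M i)⁻¹ * C i)
    (hM : ∀ i < N + 1, (M i).IsSymm ∧ IsUnit (M i).det) (hx : x (N + 1) = 0) :
    ∑ i ∈ range (N + 1), (x i - (M i)⁻¹ *ᵥ (C i *ᵥ x (i + 1))) ⬝ᵥ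
        (M i *ᵥ (x i - (M i)⁻¹ *ᵥ (C i *ᵥ x (i + 1)))) =
      ∑ i ∈ range (N + 1), x i ⬝ᵥ (S i *ᵥ x i) - 2 * ∑ i ∈ range N, x i ⬝ᵥ (C i *ᵥ x (i + 1)) := by
  have hstep : ∀ i < N + 1, (x i - (M i)⁻¹ *ᵥ (C i *ᵥ x (i + 1))) ⬝ᵥ
      (M i *ᵥ (x i - (M i)⁻¹ *ᵥ (C i *ᵥ x (i + 1)))) =
        (x i ⬝ᵥ (M i *ᵥ x i) - x (i + 1) ⬝ᵥ (M (i + 1) *ᵥ x (i + 1)))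
          + x (i + 1) ⬝ᵥ (S (i + 1) *ᵥ x (i + 1)) - 2 * (x i ⬝ᵥ (C i *ᵥ x (i + 1))) := by
    intro i hi
    obtain ⟨hsymm, hdet⟩ := hM i hi
    rw [dotProduct_mulVec_sub_inv_mulVec hsymm hdet, hMs, sub_mulVec, dotProduct_sub,
      ← mulVec_mulVec, ← mulVec_mulVec, dotProduct_transpose_mulVec,
      dotProduct_comm ((M i)⁻¹ *ᵥ _)]
    ring
  rw [sum_congr rfl fun i hi => hstep i (mem_range.1 hi), sum_sub_distrib, sum_add_distrib,
    sum_range_sub', ← mul_sum, sum_range_succ (fun i => x i ⬝ᵥ (C i *ᵥ x (i + 1))),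
    sum_range_succ (fun i => x (i + 1) ⬝ᵥ (S (i + 1) *ᵥ x (i + 1))) N,
    sum_range_succ' (fun i => x i ⬝ᵥ (S i *ᵥ x i)) N,
    hx, hM0]
  simp only [mulVec_zero, dotProduct_zero]
  ring

theorem exists_last_ne_zero {α : ℕ → Type*} [∀ i, Zero (α i)] (x : ∀ i, α i) {N : ℕ}
    (hN : x (N + 1) = 0) {i : ℕ} (hi : i < N + 1) (hxi : x i ≠ 0) :
    ∃ j < N + 1, x j ≠ 0 ∧ x (j + 1) = 0 := by
  obtain ⟨d, hd⟩ : ∃ d, N - i = d := ⟨_, rfl⟩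
  induction d generalizing i with
  | zero => exact ⟨i, hi, hxi, by rwa [show i = N by omega]⟩
  | succ d ih =>
    by_cases hnext : x (i + 1) = 0
    · exact ⟨i, hi, hxi, hnext⟩
    · exact ih (by omega) hnext (by omega)

theorem sum_dotProduct_messenger_pos (M : ∀ i, Matrix (m i) (m i) ℝ)
    (C : ∀ i, Matrix (m i) (m (i + 1)) ℝ) (x : ∀ i, m i → ℝ) {N : ℕ}
    (hM : ∀ i < N + 1, (M i).PosDef) (hx : x (N + 1) = 0) {i : ℕ} (hi : i < N + 1)
    (hxi : x i ≠ 0) :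
    0 < ∑ i ∈ range (N + 1), (x i - (M i)⁻¹ *ᵥ (C i *ᵥ x (i + 1))) ⬝ᵥ
        (M i *ᵥ (x i - (M i)⁻¹ *ᵥ (C i *ᵥ x (i + 1)))) := by
  obtain ⟨j, hj, hxj, hxj1⟩ := exists_last_ne_zero x hx hi hxi
  refine sum_pos' (fun k hk => ?_) ⟨j, mem_range.2 hj, ?_⟩
  · simpa using (hM k (mem_range.1 hk)).posSemidef.dotProduct_mulVec_nonneg
      (x k - (M k)⁻¹ *ᵥ (C k *ᵥ x (k + 1)))
  · rw [hxj1, mulVec_zero, mulVec_zero, sub_zero]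
    simpa using (hM j hj).dotProduct_mulVec_pos hxj

end Messenger

theorem isHermitian_neg_transpose_mul_sub {R n : Type*} [CommRing R] [StarRing R] [TrivialStar R]
    [Fintype n] [DecidableEq n] (K P : Matrix n n R) (hP : P.IsSymm) (c : R) :
    (-Kᵀ * P - P * K - c • (1 : Matrix n n R)).IsHermitian := by
  rw [IsHermitian, conjTranspose_eq_transpose_of_trivial]
  simp only [transpose_sub, transpose_neg, transpose_mul, transpose_transpose, transpose_smul,
    transpose_one, hP.eq, neg_mul]
  abel

theorem dotProduct_neg_transpose_mul_sub_mulVec {R n : Type*} [CommRing R] [Fintype n]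
    [DecidableEq n] (K P : Matrix n n R) (hP : P.IsSymm) (c : R) (x : n → R) :
    x ⬝ᵥ ((-Kᵀ * P - P * K - c • (1 : Matrix n n R)) *ᵥ x) =
      -2 * (x ⬝ᵥ ((P * K) *ᵥ x)) - c * (x ⬝ᵥ x) := by
  have hKP : Kᵀ * P = (P * K)ᵀ := by rw [transpose_mul, hP.eq]
  simp only [neg_mul, hKP, sub_mulVec, neg_mulVec, smul_mulVec, one_mulVec, dotProduct_sub,
    dotProduct_neg, dotProduct_smul, smul_eq_mul, dotProduct_transpose_mulVec]
  ring

section ClosedLoop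

variable {R : Type*} [CommRing R] {m p : ℕ → Type*} [∀ i, Fintype (m i)] [∀ i, Fintype (p i)]
  (A Q : ∀ i, Matrix (m i) (m i) R) (B1 : ∀ i, Matrix (m i) (p i) R)
  (h : ∀ i j, Matrix (p i) (m j) R) (ε : ℕ → R)

/- `hatH`, `subsystemMatrix` and `couplingMatrix` are the paper's `Ĥ_{i,j}` and `𝒮ᵢ`, and the
`Cᵢ` above. -/
def hatH (i j : ℕ) : Matrix (m i) (m j) R := Q i * B1 i * h i j

def subsystemMatrix [∀ i, DecidableEq (m i)] (i : ℕ) : Matrix (m i) (m i) R :=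
  -((A i)ᵀ * Q i + Q i * A i) - (hatH Q B1 h i i + (hatH Q B1 h i i)ᵀ) - ε i • 1

def couplingMatrix (i : ℕ) : Matrix (m i) (m (i + 1)) R :=
  hatH Q B1 h i (i + 1) + (hatH Q B1 h (i + 1) i)ᵀ

theorem dotProduct_subsystemMatrix_mulVec [∀ i, DecidableEq (m i)] {i : ℕ} (hQ : (Q i).IsSymm)
    (v : m i → R) :
    v ⬝ᵥ (subsystemMatrix A Q B1 h ε i *ᵥ v) =
      -2 * (v ⬝ᵥ ((Q i * A i) *ᵥ v)) - 2 * (v ⬝ᵥ (hatH Q B1 h i i *ᵥ v)) - ε i * (v ⬝ᵥ v) := by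
  have hAQ : (A i)ᵀ * Q i = (Q i * A i)ᵀ := by rw [transpose_mul, hQ.eq]
  simp only [subsystemMatrix, hAQ, sub_mulVec, add_mulVec, neg_mulVec, smul_mulVec, one_mulVec,
    dotProduct_sub, dotProduct_add, dotProduct_neg, dotProduct_smul, smul_eq_mul,
    dotProduct_transpose_mulVec]
  ring

theorem dotProduct_couplingMatrix_mulVec (i : ℕ) (u : m i → R) (v : m (i + 1) → R) :
    u ⬝ᵥ (couplingMatrix Q B1 h i *ᵥ v) =
      u ⬝ᵥ (hatH Q B1 h i (i + 1) *ᵥ v) + v ⬝ᵥ (hatH Q B1 h (i + 1) i *ᵥ u) := by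
  rw [couplingMatrix, add_mulVec, dotProduct_add, dotProduct_transpose_mulVec]

theorem dotProduct_blockDiagonal'_mul_tridiagonal_mulVec [∀ i, DecidableEq (m i)] (N : ℕ)
    (hzero : ∀ i j : ℕ, (i + 1 < j ∨ j + 1 < i) → h i j = 0)
    (H : Matrix ((i : Fin (N + 1)) × p i) ((i : Fin (N + 1)) × m i) R)
    (hH : ∀ (i j : Fin (N + 1)) (a : p i) (b : m j), H ⟨i, a⟩ ⟨j, b⟩ = h i j a b)
    (x : (Σ i : Fin (N + 1), m i) → R) :
    x ⬝ᵥ ((blockDiagonal' (fun i : Fin (N + 1) => Q i)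
          * (blockDiagonal' (fun i : Fin (N + 1) => A i)
            + blockDiagonal' (fun i : Fin (N + 1) => B1 i) * H)) *ᵥ x) =
      ∑ i ∈ range (N + 1), (extendBlocks x i ⬝ᵥ ((Q i * A i) *ᵥ extendBlocks x i)
          + extendBlocks x i ⬝ᵥ (hatH Q B1 h i i *ᵥ extendBlocks x i))
        + ∑ i ∈ range N, (extendBlocks x i ⬝ᵥ (hatH Q B1 h i (i + 1) *ᵥ extendBlocks x (i + 1))
          + extendBlocks x (i + 1) ⬝ᵥ (hatH Q B1 h (i + 1) i *ᵥ extendBlocks x i)) := by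
  set t : ℕ → ℕ → R := fun i j => extendBlocks x i ⬝ᵥ (hatH Q B1 h i j *ᵥ extendBlocks x j)
  have ht : ∀ i j, i + 1 < j ∨ j + 1 < i → t i j = 0 := fun i j hij => by
    simp only [t, hatH, hzero i j hij, Matrix.mul_zero, zero_mulVec, dotProduct_zero]
  have hHblock : ∀ i j : Fin (N + 1), H.sigmaBlock i j = h i j := fun i j => by
    ext a b
    exact hH i j a b
  have hrow : ∀ i : Fin (N + 1), ∑ j : Fin (N + 1),
      extendBlocks x i ⬝ᵥ ((Q i * B1 i * h i j) *ᵥ extendBlocks x j) =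
        ∑ j ∈ range (N + 1), t i j :=
    fun i => Fin.sum_univ_eq_sum_range (t i) _
  rw [dotProduct_blockDiagonal'_mul_mulVec]
  simp only [hHblock, ← extendBlocks_coe, hrow]
  rw [Fin.sum_univ_eq_sum_range (fun i => extendBlocks x i ⬝ᵥ ((Q i * A i) *ᵥ extendBlocks x i)
      + ∑ j ∈ range (N + 1), t i j), sum_add_distrib, sum_range_sum_range_of_tridiagonal t ht N,
    ← add_assoc, ← sum_add_distrib]

theorem dotProduct_closedLoop_mulVec [∀ i, DecidableEq (m i)] (N : ℕ)
    (hQ : ∀ i : Fin (N + 1), (Q i).IsSymm)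
    (hzero : ∀ i j : ℕ, (i + 1 < j ∨ j + 1 < i) → h i j = 0)
    (H : Matrix ((i : Fin (N + 1)) × p i) ((i : Fin (N + 1)) × m i) R)
    (hH : ∀ (i j : Fin (N + 1)) (a : p i) (b : m j), H ⟨i, a⟩ ⟨j, b⟩ = h i j a b)
    (c : R) (x : (Σ i : Fin (N + 1), m i) → R) :
    x ⬝ᵥ ((-(blockDiagonal' (fun i : Fin (N + 1) => A i)
            + blockDiagonal' (fun i : Fin (N + 1) => B1 i) * H)ᵀ
          * blockDiagonal' (fun i : Fin (N + 1) => Q i)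
        - blockDiagonal' (fun i : Fin (N + 1) => Q i)
          * (blockDiagonal' (fun i : Fin (N + 1) => A i)
            + blockDiagonal' (fun i : Fin (N + 1) => B1 i) * H)
        - c • (1 : Matrix ((i : Fin (N + 1)) × m i) ((i : Fin (N + 1)) × m i) R)) *ᵥ x) =
      (∑ i ∈ range (N + 1),
          extendBlocks x i ⬝ᵥ (subsystemMatrix A Q B1 h ε i *ᵥ extendBlocks x i)
        - 2 * ∑ i ∈ range N,
          extendBlocks x i ⬝ᵥ (couplingMatrix Q B1 h i *ᵥ extendBlocks x (i + 1)))
        + ∑ i ∈ range (N + 1), (ε i - c) * (extendBlocks x i ⬝ᵥ extendBlocks x i) := by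
  have hS : ∑ i ∈ range (N + 1),
      extendBlocks x i ⬝ᵥ (subsystemMatrix A Q B1 h ε i *ᵥ extendBlocks x i) =
        ∑ i ∈ range (N + 1), (-2 * (extendBlocks x i ⬝ᵥ ((Q i * A i) *ᵥ extendBlocks x i))
          - 2 * (extendBlocks x i ⬝ᵥ (hatH Q B1 h i i *ᵥ extendBlocks x i))
          - ε i * (extendBlocks x i ⬝ᵥ extendBlocks x i)) :=
    sum_congr rfl fun i hi =>
      dotProduct_subsystemMatrix_mulVec A Q B1 h ε (hQ ⟨i, mem_range.1 hi⟩) _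
  have hC : ∑ i ∈ range N,
      extendBlocks x i ⬝ᵥ (couplingMatrix Q B1 h i *ᵥ extendBlocks x (i + 1)) =
        ∑ i ∈ range N, (extendBlocks x i ⬝ᵥ (hatH Q B1 h i (i + 1) *ᵥ extendBlocks x (i + 1))
          + extendBlocks x (i + 1) ⬝ᵥ (hatH Q B1 h (i + 1) i *ᵥ extendBlocks x i)) :=
    sum_congr rfl fun i _ => dotProduct_couplingMatrix_mulVec Q B1 h i _ _
  rw [dotProduct_neg_transpose_mul_sub_mulVec _ _ (IsSymm.blockDiagonal' hQ),
    dotProduct_blockDiagonal'_mul_tridiagonal_mulVec A Q B1 h N hzero H hH, dotProduct_sigma,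
    hS, hC]
  simp only [← extendBlocks_coe,
    Fin.sum_univ_eq_sum_range (fun i => extendBlocks x i ⬝ᵥ extendBlocks x i), sub_mul,
    mul_add, sum_add_distrib, sum_sub_distrib, ← mul_sum]
  ring

end ClosedLoop

theorem stmt7_general (N : ℕ) (n p : ℕ → ℕ)
    (A : (i : ℕ) → Matrix (Fin (n i)) (Fin (n i)) ℝ)
    (B1 : (i : ℕ) → Matrix (Fin (n i)) (Fin (p i)) ℝ)
    (Q : (i : ℕ) → Matrix (Fin (n i)) (Fin (n i)) ℝ)
    (hQ : ∀ i : Fin (N + 1), (Q (i : ℕ)).PosDef)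
    (ε : ℕ → ℝ)
    (h : (i j : ℕ) → Matrix (Fin (p i)) (Fin (n j)) ℝ)
    (hzero : ∀ i j : ℕ, (i + 1 < j ∨ j + 1 < i) → h i j = 0)
    (H : Matrix ((i : Fin (N + 1)) × Fin (p i)) ((i : Fin (N + 1)) × Fin (n i)) ℝ)
    (hH : ∀ (i j : Fin (N + 1)) (a : Fin (p i)) (b : Fin (n j)),
      H ⟨i, a⟩ ⟨j, b⟩ = h i j a b)
    (M : (i : ℕ) → Matrix (Fin (n i)) (Fin (n i)) ℝ)
    (hM0 : M 0 = -((A 0)ᵀ * Q 0 + Q 0 * A 0)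
        - (Q 0 * B1 0 * h 0 0 + (Q 0 * B1 0 * h 0 0)ᵀ)
        - ε 0 • (1 : Matrix (Fin (n 0)) (Fin (n 0)) ℝ))
    (hMs : ∀ i : ℕ, M (i + 1) =
        (-((A (i + 1))ᵀ * Q (i + 1) + Q (i + 1) * A (i + 1))
          - (Q (i + 1) * B1 (i + 1) * h (i + 1) (i + 1)
              + (Q (i + 1) * B1 (i + 1) * h (i + 1) (i + 1))ᵀ)
          - ε (i + 1) • (1 : Matrix (Fin (n (i + 1))) (Fin (n (i + 1))) ℝ))
        - ((Q i * B1 i * h i (i + 1))ᵀ + Q (i + 1) * B1 (i + 1) * h (i + 1) i)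
          * (M i)⁻¹
          * (Q i * B1 i * h i (i + 1) + (Q (i + 1) * B1 (i + 1) * h (i + 1) i)ᵀ))
    (hMpos : ∀ i : Fin (N + 1), (M (i : ℕ)).PosDef) :
    ∀ εmin : ℝ,
      εmin = Finset.univ.inf' Finset.univ_nonempty (fun i : Fin (N + 1) => ε (i : ℕ)) →
      (-(Matrix.blockDiagonal' (fun i : Fin (N + 1) => A i)
            + Matrix.blockDiagonal' (fun i : Fin (N + 1) => B1 i) * H)ᵀ
          * Matrix.blockDiagonal' (fun i : Fin (N + 1) => Q i)
        - Matrix.blockDiagonal' (fun i : Fin (N + 1) => Q i)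
          * (Matrix.blockDiagonal' (fun i : Fin (N + 1) => A i)
            + Matrix.blockDiagonal' (fun i : Fin (N + 1) => B1 i) * H)
        - εmin •
          (1 : Matrix ((i : Fin (N + 1)) × Fin (n i)) ((i : Fin (N + 1)) × Fin (n i)) ℝ)).PosDef := by
  intro εmin hεmin
  have hQsymm (i : Fin (N + 1)) : (Q i).IsSymm := isHermitian_iff_isSymm.1 (hQ i).isHermitian
  have hMs' (i : ℕ) : M (i + 1) = subsystemMatrix A Q B1 h ε (i + 1) -
      (couplingMatrix Q B1 h i)ᵀ * (M i)⁻¹ * couplingMatrix Q B1 h i := by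
    rw [hMs i]
    simp only [subsystemMatrix, couplingMatrix, hatH, transpose_add, transpose_transpose]
  have hMinv : ∀ i < N + 1, (M i).IsSymm ∧ IsUnit (M i).det := fun i hi =>
    ⟨isHermitian_iff_isSymm.1 (hMpos ⟨i, hi⟩).isHermitian, (hMpos ⟨i, hi⟩).det_pos.ne'.isUnit⟩
  refine posDef_iff_dotProduct_mulVec.2
    ⟨isHermitian_neg_transpose_mul_sub _ _ (IsSymm.blockDiagonal' hQsymm) _, fun x hx => ?_⟩
  obtain ⟨i, hi, hxi⟩ := exists_extendBlocks_ne_zero (m := fun i => Fin (n i)) hx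
  have hlast := extendBlocks_of_le (m := fun i => Fin (n i)) x (le_refl (N + 1))
  rw [star_trivial, dotProduct_closedLoop_mulVec A Q B1 h ε N hQsymm hzero H hH,
    ← sum_dotProduct_messenger_eq _ M _ _ N hM0 hMs' hMinv hlast]
  refine add_pos_of_pos_of_nonneg
    (sum_dotProduct_messenger_pos M _ _ (fun i hi => hMpos ⟨i, hi⟩) hlast hi hxi)
    (sum_nonneg fun i hi => mul_nonneg ?_ (sum_nonneg fun _ _ => mul_self_nonneg _))
  rw [sub_nonneg, hεmin]
  exact inf'_le (fun j : Fin (N + 1) => ε j) (mem_univ ⟨i, mem_range.1 hi⟩)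

/-- Given subsystem data `A i`, `B1 i`, symmetric positive definite `Q i`,
scalars `ε i > 0`, coupling blocks `h i j` (zero for `|i - j| > 1`),
`Ĥ i j = Q i * B1 i * h i j`, `S i = -(A iᵀ Q i + Q i A i) - (Ĥ i i + Ĥ i iᵀ) - ε i • I`,
and messenger matrices `M 0 = S 0`,
`M (i+1) = S (i+1) - (Ĥ i (i+1)ᵀ + Ĥ (i+1) i) (M i)⁻¹ (Ĥ i (i+1) + Ĥ (i+1) iᵀ)`,
if every `M i` is (well-defined and) positive definite, then with `A = diag(A i)`,
`B⁽¹⁾ = diag(B1 i)`, `Q = diag(Q i)`, `H = [h i j]` and `εmin = min_i ε i`, the matrix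
`W = -(A + B⁽¹⁾H)ᵀ Q - Q (A + B⁽¹⁾H) - εmin • I` is positive definite. -/
theorem stmt7 (N : ℕ) (n p : ℕ → ℕ)
    (A : (i : ℕ) → Matrix (Fin (n i)) (Fin (n i)) ℝ)
    (B1 : (i : ℕ) → Matrix (Fin (n i)) (Fin (p i)) ℝ)
    (Q : (i : ℕ) → Matrix (Fin (n i)) (Fin (n i)) ℝ)
    (hQ : ∀ i : Fin (N + 1), (Q (i : ℕ)).PosDef)
    (ε : ℕ → ℝ) (hε : ∀ i : Fin (N + 1), 0 < ε (i : ℕ))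
    (h : (i j : ℕ) → Matrix (Fin (p i)) (Fin (n j)) ℝ)
    (hzero : ∀ i j : ℕ, (i + 1 < j ∨ j + 1 < i) → h i j = 0)
    (H : Matrix ((i : Fin (N + 1)) × Fin (p i)) ((i : Fin (N + 1)) × Fin (n i)) ℝ)
    (hH : ∀ (i j : Fin (N + 1)) (a : Fin (p i)) (b : Fin (n j)),
      H ⟨i, a⟩ ⟨j, b⟩ = h i j a b)
    (M : (i : ℕ) → Matrix (Fin (n i)) (Fin (n i)) ℝ)
    (hM0 : M 0 = -((A 0)ᵀ * Q 0 + Q 0 * A 0)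
        - (Q 0 * B1 0 * h 0 0 + (Q 0 * B1 0 * h 0 0)ᵀ)
        - ε 0 • (1 : Matrix (Fin (n 0)) (Fin (n 0)) ℝ))
    (hMs : ∀ i : ℕ, M (i + 1) =
        (-((A (i + 1))ᵀ * Q (i + 1) + Q (i + 1) * A (i + 1))
          - (Q (i + 1) * B1 (i + 1) * h (i + 1) (i + 1)
              + (Q (i + 1) * B1 (i + 1) * h (i + 1) (i + 1))ᵀ)
          - ε (i + 1) • (1 : Matrix (Fin (n (i + 1))) (Fin (n (i + 1))) ℝ))
        - ((Q i * B1 i * h i (i + 1))ᵀ + Q (i + 1) * B1 (i + 1) * h (i + 1) i)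
          * (M i)⁻¹
          * (Q i * B1 i * h i (i + 1) + (Q (i + 1) * B1 (i + 1) * h (i + 1) i)ᵀ))
    (hMpos : ∀ i : Fin (N + 1), (M (i : ℕ)).PosDef) :
    ∀ εmin : ℝ,
      εmin = Finset.univ.inf' Finset.univ_nonempty (fun i : Fin (N + 1) => ε (i : ℕ)) →
      (-(Matrix.blockDiagonal' (fun i : Fin (N + 1) => A i)
            + Matrix.blockDiagonal' (fun i : Fin (N + 1) => B1 i) * H)ᵀ
          * Matrix.blockDiagonal' (fun i : Fin (N + 1) => Q i)
        - Matrix.blockDiagonal' (fun i : Fin (N + 1) => Q i)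
          * (Matrix.blockDiagonal' (fun i : Fin (N + 1) => A i)
            + Matrix.blockDiagonal' (fun i : Fin (N + 1) => B1 i) * H)
        - εmin •
          (1 : Matrix ((i : Fin (N + 1)) × Fin (n i)) ((i : Fin (N + 1)) × Fin (n i)) ℝ)).PosDef :=
  stmt7_general N n p A B1 Q hQ ε h hzero H hH M hM0 hMs hMpos
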